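/- In the poset Δ⁺ of positive roots of type A_n with n ≥ 3, for 1 ≤ k ≤ n one has 𝔛^k({α₁}) = {(i,j) : 1 ≤ i ≤ j ≤ n−1 and j − i + 1 = n + 1 − k} ∪ {(k+1, n)}; in particular, 𝔛^n({α₁}) = {α₁, …, α_{n−1}} and 𝔛^{n+1}({α₁}) = {α_n}. -/

import Mathlib

/-!
In a lower set of `Δ⁺` (a convex set for `≼`) a root `(i,j)` is maximal iff neither upper cover
`(i-1,j)`, `(i,j+1)` lies in the set. The complement of `I(Γ_k)`, for `Γ_k` the claimed value of
`𝔛^k({α₁})`, consists of the roots that neither contain an interval of length `n+1-k` inside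
`[1,n-1]` nor lie above `(k+1,n)`; both conditions are linear in `(i,j)`, so each step
`𝔛(Γ_k) = Γ_{k+1}` is a linear-arithmetic identity.
-/

open Finset

/-- The root order on pairs: `(i,j) ≼ (i',j')` iff `i' ≤ i` and `j ≤ j'`. -/
def rle (p q : ℕ × ℕ) : Prop := q.1 ≤ p.1 ∧ p.2 ≤ q.2

instance : DecidableRel rle := fun p q =>
  inferInstanceAs (Decidable (q.1 ≤ p.1 ∧ p.2 ≤ q.2))

/-- The positive roots of type `A_n`, modelled as pairs `(i,j)` with `1 ≤ i ≤ j ≤ n`. -/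
def roots (n : ℕ) : Finset (ℕ × ℕ) :=
  ((Finset.Icc 1 n) ×ˢ (Finset.Icc 1 n)).filter (fun p => p.1 ≤ p.2)

/-- `Γ` is an antichain in `Δ⁺(A_n)`: a set of pairwise incomparable positive roots. -/
def IsAC (n : ℕ) (Γ : Finset (ℕ × ℕ)) : Prop :=
  Γ ⊆ roots n ∧ ∀ p ∈ Γ, ∀ q ∈ Γ, rle p q → p = q

/-- The upper ideal `I(Γ) = {x ∈ Δ⁺ : ∃ γ ∈ Γ, γ ≼ x}` generated by `Γ`. -/
def upIdeal (n : ℕ) (Γ : Finset (ℕ × ℕ)) : Finset (ℕ × ℕ) :=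
  (roots n).filter (fun x => ∃ γ ∈ Γ, rle γ x)

/-- The set of maximal elements of `S` with respect to the root order. -/
def maxOf (S : Finset (ℕ × ℕ)) : Finset (ℕ × ℕ) :=
  S.filter (fun x => ∀ y ∈ S, rle x y → y = x)

/-- The set of minimal elements of `S` with respect to the root order. -/
def minOf (S : Finset (ℕ × ℕ)) : Finset (ℕ × ℕ) :=
  S.filter (fun x => ∀ y ∈ S, rle y x → y = x)

/-- The reverse operator `𝔛`, sending an antichain `Γ` to the set of maximal
elements of `Δ⁺ \ I(Γ)`. -/
def Xrev (n : ℕ) (Γ : Finset (ℕ × ℕ)) : Finset (ℕ × ℕ) :=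
  maxOf (roots n \ upIdeal n Γ)

/-- `r_Γ(γ) = #(I(Γ) \ {γ})_min − #I(Γ)_min + 1`. -/
def rGam (n : ℕ) (Γ : Finset (ℕ × ℕ)) (γ : ℕ × ℕ) : ℤ :=
  ((minOf (upIdeal n Γ \ {γ})).card : ℤ) - ((minOf (upIdeal n Γ)).card : ℤ) + 1

/-- The OY-number `𝒴(Γ) = Σ_{γ ∈ Γ} r_Γ(γ)`; in particular `𝒴(∅) = 0`. -/
def OY (n : ℕ) (Γ : Finset (ℕ × ℕ)) : ℤ := ∑ γ ∈ Γ, rGam n Γ γ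


def gammaSet (n k : ℕ) : Finset (ℕ × ℕ) :=
  (roots n).filter
    (fun p => (p.2 ≤ n - 1 ∧ p.2 - p.1 + 1 = n + 1 - k) ∨ p = (k + 1, n))

lemma rle_trans {p q r : ℕ × ℕ} (hpq : rle p q) (hqr : rle q r) : rle p r :=
  ⟨hqr.1.trans hpq.1, hpq.2.trans hqr.2⟩

lemma mem_roots {n : ℕ} {p : ℕ × ℕ} :
    p ∈ roots n ↔ 1 ≤ p.1 ∧ p.1 ≤ p.2 ∧ p.2 ≤ n := by
  simp only [roots, mem_filter, mem_product, mem_Icc]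
  omega

lemma mem_gammaSet {n k : ℕ} {p : ℕ × ℕ} :
    p ∈ gammaSet n k ↔ (1 ≤ p.1 ∧ p.1 ≤ p.2 ∧ p.2 ≤ n) ∧
      ((p.2 + 1 ≤ n ∧ p.2 + k = n + p.1) ∨ (p.1 = k + 1 ∧ p.2 = n)) := by
  simp only [gammaSet, mem_filter, mem_roots, Prod.ext_iff]
  omega

lemma mem_maxOf_iff {S : Finset (ℕ × ℕ)}
    (hS : ∀ x ∈ S, ∀ y ∈ S, ∀ z, rle x z → rle z y → z ∈ S) {x : ℕ × ℕ} :
    x ∈ maxOf S ↔ x ∈ S ∧ (0 < x.1 → (x.1 - 1, x.2) ∉ S) ∧ (x.1, x.2 + 1) ∉ S := by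
  simp only [maxOf, mem_filter]
  constructor
  · rintro ⟨hx, hmax⟩
    refine ⟨hx, fun hpos hmem => ?_, fun hmem => ?_⟩
    · have := congrArg Prod.fst (hmax _ hmem ⟨Nat.sub_le _ _, le_rfl⟩)
      simp only at this
      omega
    · have := congrArg Prod.snd (hmax _ hmem ⟨le_rfl, Nat.le_succ _⟩)
      simp only at this
      omega
  · rintro ⟨hx, hleft, hright⟩
    refine ⟨hx, fun y hy hxy => ?_⟩
    by_contra hne
    rcases Nat.lt_or_ge y.1 x.1 with hlt | hge
    · exact hleft (by omega) (hS x hx y hy _ ⟨by omega, le_rfl⟩ ⟨by omega, hxy.2⟩)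
    · obtain ⟨h1, h2⟩ := hxy
      have hlt : x.2 < y.2 := lt_of_le_of_ne h2 fun h => hne (Prod.ext (by omega) h.symm)
      exact hright (hS x hx y hy _ ⟨le_rfl, by omega⟩ ⟨h1, hlt⟩)

lemma mem_roots_sdiff_upIdeal {n : ℕ} {Γ : Finset (ℕ × ℕ)} {q : ℕ × ℕ} :
    q ∈ roots n \ upIdeal n Γ ↔ (1 ≤ q.1 ∧ q.1 ≤ q.2 ∧ q.2 ≤ n) ∧ ∀ γ ∈ Γ, ¬ rle γ q := by
  simp only [upIdeal, mem_sdiff, mem_filter, not_and, not_exists, ← mem_roots]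
  exact and_congr_right fun hq => ⟨fun h γ hγ => h hq γ hγ, fun h _ => h⟩

lemma mem_Xrev {n : ℕ} {Γ : Finset (ℕ × ℕ)} {p : ℕ × ℕ} :
    p ∈ Xrev n Γ ↔ p ∈ roots n \ upIdeal n Γ ∧
      (0 < p.1 → (p.1 - 1, p.2) ∉ roots n \ upIdeal n Γ) ∧
      (p.1, p.2 + 1) ∉ roots n \ upIdeal n Γ := by
  refine mem_maxOf_iff fun x hx y hy z hxz hzy => ?_
  rw [mem_roots_sdiff_upIdeal] at hx hy ⊢
  exact ⟨by simp only [rle] at hxz hzy; omega,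
    fun γ hγ hγz => hy.2 γ hγ (rle_trans hγz hzy)⟩

lemma mem_roots_sdiff_upIdeal_gammaSet {n k : ℕ} (hk : 1 ≤ k) (hkn : k ≤ n) {q : ℕ × ℕ} :
    q ∈ roots n \ upIdeal n (gammaSet n k) ↔ (1 ≤ q.1 ∧ q.1 ≤ q.2 ∧ q.2 ≤ n) ∧
      ¬ (q.1 < k ∧ q.1 + n ≤ q.2 + k) ∧ ¬ (k < n ∧ q.2 = n ∧ q.1 ≤ k + 1) := by
  rw [mem_roots_sdiff_upIdeal]
  refine and_congr_right fun hq => ⟨fun h => ⟨fun hc => ?_, fun hc => ?_⟩, ?_⟩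
  · exact h (q.1, q.1 + n - k) (mem_gammaSet.mpr (by omega)) ⟨le_rfl, by omega⟩
  · exact h (k + 1, n) (mem_gammaSet.mpr (by omega)) ⟨hc.2.2, hc.2.1.ge⟩
  · rintro h γ hγ ⟨h1, h2⟩
    rw [mem_gammaSet] at hγ
    omega

lemma Xrev_alpha_one (n : ℕ) :
    Xrev n {(1, 1)} = gammaSet n 1 := by
  ext p
  simp only [mem_Xrev, mem_roots_sdiff_upIdeal, mem_singleton, forall_eq, rle, mem_gammaSet]
  omega

lemma Xrev_gammaSet {n k : ℕ} (hk : 1 ≤ k) (hkn : k < n) :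
    Xrev n (gammaSet n k) = gammaSet n (k + 1) := by
  ext p
  simp only [mem_Xrev, mem_roots_sdiff_upIdeal_gammaSet hk hkn.le, mem_gammaSet]
  omega

lemma Xrev_gammaSet_self {n : ℕ} (hn : 1 ≤ n) :
    Xrev n (gammaSet n n) = {(n, n)} := by
  ext p
  simp only [mem_Xrev, mem_roots_sdiff_upIdeal_gammaSet hn le_rfl, mem_singleton, Prod.ext_iff]
  omega

lemma gammaSet_self (n : ℕ) :
    gammaSet n n = (Icc 1 (n - 1)).image fun t => (t, t) := by
  ext p
  simp only [mem_gammaSet, mem_image, mem_Icc, Prod.ext_iff]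
  exact ⟨fun h => ⟨p.1, by omega⟩, fun ⟨t, ht⟩ => by omega⟩

lemma iterate_Xrev_alpha_one {n k : ℕ} (hk : 1 ≤ k) (hkn : k ≤ n) :
    (Xrev n)^[k] {(1, 1)} = gammaSet n k := by
  induction k, hk using Nat.le_induction with
  | base => exact Xrev_alpha_one n
  | succ k hk ih =>
    rw [Function.iterate_succ_apply', ih (by omega), Xrev_gammaSet hk (by omega)]

/-- In `Δ⁺(A_n)` with `n ≥ 3`, for `1 ≤ k ≤ n` one has
`𝔛^k({α₁}) = {(i,j) ∈ Δ⁺ : j ≤ n−1, j−i+1 = n+1−k} ∪ {(k+1,n)}`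
(the union taken inside `Δ⁺`); in particular `𝔛^n({α₁}) = {α₁,…,α_{n−1}}` and
`𝔛^{n+1}({α₁}) = {α_n}`. -/
theorem stmt10 (n : ℕ) (hn : 3 ≤ n) :
    (∀ k, 1 ≤ k → k ≤ n →
      (Xrev n)^[k] ({((1 : ℕ), (1 : ℕ))} : Finset (ℕ × ℕ))
        = (roots n).filter
            (fun p => (p.2 ≤ n - 1 ∧ p.2 - p.1 + 1 = n + 1 - k) ∨ p = (k + 1, n))) ∧
    (Xrev n)^[n] ({((1 : ℕ), (1 : ℕ))} : Finset (ℕ × ℕ))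
      = (Finset.Icc 1 (n - 1)).image (fun t => (t, t)) ∧
    (Xrev n)^[n + 1] ({((1 : ℕ), (1 : ℕ))} : Finset (ℕ × ℕ)) = {(n, n)} := by
  have hiter := fun k => @iterate_Xrev_alpha_one n k
  refine ⟨hiter, ?_, ?_⟩
  · rw [hiter n (by omega) le_rfl, gammaSet_self]
  · rw [Function.iterate_succ_apply', hiter n (by omega) le_rfl, Xrev_gammaSet_self (by omega)]
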